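/- arXiv:2207.09104 — 2 statements merged into one kernel-verified Lean document; each statement's English description precedes it below -/
import Mathlib

section
/- Let a > 0, 0 < ν < 1, α₀ > 0 and set K = q*·α₀^ν·λ₀/(2·l_m·γ_m) with q*, λ₀, l_m, γ_m > 0. Then the function φ(ξ) = K·exp(−(ξ² − α₀²)/a) satisfies φ(α₀) > 0, φ(ξ) → 0 as ξ → +∞, and φ is strictly decreasing on (0, ∞); consequently the equation φ(ξ) = ξ^{ν+1} has exactly one solution ξ > 0. -/
open Real Set Filter

theorem stmt_15 (a ν α₀ q lam0 lm γm K : ℝ)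
    (ha : 0 < a) (hν0 : 0 < ν) (hν1 : ν < 1) (hα₀ : 0 < α₀)
    (hq : 0 < q) (hlam0 : 0 < lam0) (hlm : 0 < lm) (hγm : 0 < γm)
    (hK : K = q * α₀ ^ ν * lam0 / (2 * lm * γm)) :
    0 < K * Real.exp (-(α₀ ^ 2 - α₀ ^ 2) / a) ∧
    Tendsto (fun ξ : ℝ => K * Real.exp (-(ξ ^ 2 - α₀ ^ 2) / a)) atTop (nhds 0) ∧
    StrictAntiOn (fun ξ : ℝ => K * Real.exp (-(ξ ^ 2 - α₀ ^ 2) / a)) (Ioi 0) ∧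
    ∃! ξ : ℝ, 0 < ξ ∧ K * Real.exp (-(ξ ^ 2 - α₀ ^ 2) / a) = ξ ^ (ν + 1) := by
  have hK0 : 0 < K := by
    subst hK; positivity
  set φ : ℝ → ℝ := fun ξ => K * Real.exp (-(ξ ^ 2 - α₀ ^ 2) / a) with hφ
  have hanti : StrictAntiOn φ (Ioi 0) := by
    intro x hx y hy hxy
    have hx0 : 0 < x := hx
    have hx2 : x ^ 2 < y ^ 2 := by nlinarith
    have hlt : -(y ^ 2 - α₀ ^ 2) / a < -(x ^ 2 - α₀ ^ 2) / a :=
      (div_lt_div_iff_of_pos_right ha).mpr (by linarith)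
    exact mul_lt_mul_of_pos_left (Real.exp_lt_exp.mpr hlt) hK0
  have htend : Tendsto φ atTop (nhds 0) := by
    have h0 : Tendsto (fun ξ : ℝ => ξ ^ 2) atTop atTop :=
      tendsto_pow_atTop two_ne_zero
    have h1 : Tendsto (fun ξ : ℝ => ξ ^ 2 - α₀ ^ 2) atTop atTop :=
      tendsto_atTop_add_const_right _ (-α₀ ^ 2) h0 |>.congr (fun x => by ring)
    have h2 : Tendsto (fun ξ : ℝ => -(ξ ^ 2 - α₀ ^ 2)) atTop atBot :=
      tendsto_neg_atTop_atBot.comp h1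
    have h3 : Tendsto (fun ξ : ℝ => -(ξ ^ 2 - α₀ ^ 2) / a) atTop atBot :=
      h2.atBot_div_const ha
    have h4 : Tendsto (fun ξ : ℝ => Real.exp (-(ξ ^ 2 - α₀ ^ 2) / a)) atTop (nhds 0) :=
      Real.tendsto_exp_atBot.comp h3
    have h5 := h4.const_mul K
    rw [mul_zero] at h5
    exact h5
  refine ⟨by positivity, htend, hanti, ?_⟩
  -- choose c
  set c : ℝ := min α₀ (min 1 (K / 2)) with hc
  have hc0 : 0 < c := by
    apply lt_min hα₀ (lt_min one_pos (by linarith))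
  have hcα : c ≤ α₀ := min_le_left _ _
  have hc1 : c ≤ 1 := le_trans (min_le_right _ _) (min_le_left _ _)
  have hcK : c ≤ K / 2 := le_trans (min_le_right _ _) (min_le_right _ _)
  have hcpow : c ^ (ν + 1) < K := by
    have h1 : c ^ (ν + 1) ≤ c ^ (1 : ℝ) :=
      Real.rpow_le_rpow_of_exponent_ge hc0 hc1 (by linarith)
    rw [Real.rpow_one] at h1
    linarith
  have hφc : K ≤ φ c := by
    have : (0 : ℝ) ≤ -(c ^ 2 - α₀ ^ 2) / a := by
      apply div_nonneg _ ha.le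
      nlinarith
    have h6 := Real.one_le_exp this
    simp only [hφ]
    nlinarith
  -- choose d
  have hev : ∀ᶠ ξ : ℝ in atTop, φ ξ < 1 ∧ max 1 (c + 1) ≤ ξ := by
    filter_upwards [htend.eventually (gt_mem_nhds one_pos), eventually_ge_atTop (max 1 (c + 1))]
      with ξ h1 h2 using ⟨h1, h2⟩
  obtain ⟨d, hd1, hd2⟩ := hev.exists
  have hd_ge1 : (1 : ℝ) ≤ d := le_trans (le_max_left _ _) hd2
  have hcd : c < d := lt_of_lt_of_le (by linarith [le_max_right (1:ℝ) (c+1)] :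
    c < max 1 (c + 1)) hd2
  have hdpow : (1 : ℝ) ≤ d ^ (ν + 1) :=
    Real.one_le_rpow hd_ge1 (by linarith)
  -- IVT
  set f : ℝ → ℝ := fun ξ => φ ξ - ξ ^ (ν + 1) with hf
  have hcont : ContinuousOn f (Icc c d) := by
    apply ContinuousOn.sub
    · exact (continuous_const.mul (Real.continuous_exp.comp
        (((continuous_pow 2).sub continuous_const).neg.div_const a))).continuousOn
    · intro x hx
      have hx0 : x ≠ 0 := ne_of_gt (lt_of_lt_of_le hc0 hx.1)
      exact (Real.continuousAt_rpow_const x (ν + 1) (Or.inl hx0)).continuousWithinAt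
  have hfc : 0 < f c := by
    simp only [hf]; linarith
  have hfd : f d < 0 := by
    simp only [hf]; linarith
  have h0mem : (0 : ℝ) ∈ Icc (f d) (f c) := ⟨hfd.le, hfc.le⟩
  obtain ⟨ξ, hξmem, hξeq⟩ := intermediate_value_Icc' hcd.le hcont h0mem
  have hξ0 : 0 < ξ := lt_of_lt_of_le hc0 hξmem.1
  have hξsol : φ ξ = ξ ^ (ν + 1) := by
    have := hξeq; simp only [hf] at this; linarith
  refine ⟨ξ, ⟨hξ0, hξsol⟩, ?_⟩
  rintro y ⟨hy0, hysol⟩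
  have hysol' : φ y = y ^ (ν + 1) := hysol
  by_contra hne
  rcases lt_or_gt_of_ne hne with h | h
  · have h1 : φ ξ < φ y := hanti (mem_Ioi.mpr hy0) (mem_Ioi.mpr hξ0) h
    have h2 : y ^ (ν + 1) < ξ ^ (ν + 1) :=
      Real.rpow_lt_rpow hy0.le h (by linarith)
    rw [hξsol, hysol'] at h1
    linarith
  · have h1 : φ y < φ ξ := hanti (mem_Ioi.mpr hξ0) (mem_Ioi.mpr hy0) h
    have h2 : ξ ^ (ν + 1) < y ^ (ν + 1) :=
      Real.rpow_lt_rpow hξ0.le h (by linarith)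
    rw [hξsol, hysol'] at h1
    linarith
end

section
/- Let a > 0, 0 < ν < 1, α₀ > 0, p* ≥ 0, Ste > 0, and define for ξ ≥ α₀ the function φ_c(ξ) = (a·α₀^ν·Ste/2)·exp(−(ξ² − α₀²)/a) / [1 + (α₀^ν·p*/2)·exp(α₀²/a)·a^{(1−ν)/2}·(γ((1−ν)/2, ξ²/a) − γ((1−ν)/2, α₀²/a))], where γ(s,x) = ∫₀ˣ t^{s−1} e^{−t} dt is the lower incomplete gamma function. Then φ_c is strictly decreasing on [α₀, ∞) and φ_c(ξ) → 0 as ξ → +∞; moreover, if a·Ste > 2·α₀ then the equation φ_c(ξ) = ξ^{ν+1} has exactly one solution ξ ∈ (α₀, ∞). -/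
open Real Set Filter

noncomputable def lowerGamma (s x : ℝ) : ℝ :=
  ∫ t in (0 : ℝ)..x, t ^ (s - 1) * Real.exp (-t)

noncomputable def phic (a ν α₀ p Ste ξ : ℝ) : ℝ :=
  (a * α₀ ^ ν * Ste / 2) * Real.exp (-(ξ ^ 2 - α₀ ^ 2) / a) /
    (1 + (α₀ ^ ν * p / 2) * Real.exp (α₀ ^ 2 / a) * a ^ ((1 - ν) / 2) *
      (lowerGamma ((1 - ν) / 2) (ξ ^ 2 / a) -
        lowerGamma ((1 - ν) / 2) (α₀ ^ 2 / a)))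

/-!
`φ_c` is a Gaussian factor `exp (-(ξ² - α₀²)/a)`, which is positive and strictly decreasing on
`[α₀, ∞)` and tends to `0`, divided by a denominator that equals `1` at `α₀` and is nondecreasing,
since `γ(s, ·)` is the primitive of a nonnegative function. Hence `φ_c` is strictly decreasing
and tends to `0`. If `a Ste > 2 α₀` then `φ_c(α₀) = a α₀^ν Ste / 2 > α₀^{ν+1}`, while `ξ^{ν+1}`
increases and `φ_c` eventually drops below `α₀^{ν+1}`; the intermediate value theorem gives a
root of `φ_c(ξ) - ξ^{ν+1}`, which is unique because this difference is strictly decreasing.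
-/

section LowerGamma

variable {s : ℝ}

theorem intervalIntegrable_rpow_sub_one_mul_exp_neg (hs : 0 < s) (u v : ℝ) :
    IntervalIntegrable (fun t : ℝ => t ^ (s - 1) * exp (-t)) MeasureTheory.volume u v :=
  (intervalIntegral.intervalIntegrable_rpow' (by linarith)).mul_continuousOn
    (by fun_prop)

theorem continuous_lowerGamma (hs : 0 < s) : Continuous (lowerGamma s) :=
  intervalIntegral.continuous_primitive (intervalIntegrable_rpow_sub_one_mul_exp_neg hs) 0

theorem monotoneOn_lowerGamma (hs : 0 < s) : MonotoneOn (lowerGamma s) (Ici 0) := by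
  intro x hx y _ hxy
  have hsplit := intervalIntegral.integral_add_adjacent_intervals
    (intervalIntegrable_rpow_sub_one_mul_exp_neg hs 0 x)
    (intervalIntegrable_rpow_sub_one_mul_exp_neg hs x y)
  have hnonneg : 0 ≤ ∫ t in x..y, t ^ (s - 1) * exp (-t) :=
    intervalIntegral.integral_nonneg hxy fun t ht => by
      have : 0 ≤ t := le_trans hx ht.1
      positivity
  simp only [lowerGamma]
  linarith

end LowerGamma

theorem StrictAntiOn.div_of_monotoneOn {f g : ℝ → ℝ} {S : Set ℝ} (hf : StrictAntiOn f S)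
    (hf₀ : ∀ x ∈ S, 0 ≤ f x) (hg : MonotoneOn g S) (hg₀ : ∀ x ∈ S, 0 < g x) :
    StrictAntiOn (fun x => f x / g x) S := by
  intro x hx y hy hxy
  calc f y / g y ≤ f y / g x :=
        div_le_div_of_nonneg_left (hf₀ y hy) (hg₀ x hx) (hg hx hy hxy.le)
    _ < f x / g x := div_lt_div_of_pos_right (hf hx hy hxy) (hg₀ x hx)

theorem Filter.Tendsto.div_of_one_le {α : Type*} {l : Filter α} {f g : α → ℝ}
    (hf : Tendsto f l (nhds 0)) (hg : ∀ᶠ x in l, 1 ≤ g x) :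
    Tendsto (fun x => f x / g x) l (nhds 0) := by
  refine squeeze_zero_norm' ?_ (tendsto_zero_iff_norm_tendsto_zero.1 hf)
  filter_upwards [hg] with x hx
  rw [norm_div]
  exact div_le_self (norm_nonneg _) (by rwa [Real.norm_of_nonneg (by linarith)])

theorem existsUnique_eq_of_strictAntiOn_of_monotoneOn {f g : ℝ → ℝ} {x₀ : ℝ}
    (hf : StrictAntiOn f (Ici x₀)) (hg : MonotoneOn g (Ici x₀))
    (hfc : ContinuousOn f (Ici x₀)) (hgc : ContinuousOn g (Ici x₀))
    (hfg₀ : g x₀ < f x₀) (hf_lim : Tendsto f atTop (nhds 0)) (hg₀ : 0 < g x₀) :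
    ∃! ξ, ξ ∈ Ioi x₀ ∧ f ξ = g ξ := by
  have hanti : StrictAntiOn (fun x => f x - g x) (Ici x₀) := fun x hx y hy hxy => by
    have := hg hx hy hxy.le
    have := hf hx hy hxy
    dsimp only
    linarith
  obtain ⟨M, hM, hfM⟩ :=
    ((eventually_gt_atTop x₀).and (hf_lim.eventually (gt_mem_nhds hg₀))).exists
  have hgM := hg self_mem_Ici (mem_Ici.2 hM.le) hM.le
  obtain ⟨ξ, hξ, hξ_root⟩ := intermediate_value_Ioo' hM.le
    ((hfc.sub hgc).mono Icc_subset_Ici_self)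
    (show (0 : ℝ) ∈ Ioo (f M - g M) (f x₀ - g x₀) from ⟨by linarith, by linarith⟩)
  rw [Pi.sub_apply] at hξ_root
  refine ⟨ξ, ⟨hξ.1, sub_eq_zero.1 hξ_root⟩, fun y ⟨hy, hy_root⟩ => ?_⟩
  refine hanti.injOn (mem_Ici.2 (le_of_lt hy)) (mem_Ici.2 hξ.1.le) ?_
  rw [hξ_root]
  exact sub_eq_zero.2 hy_root

theorem strictAntiOn_mul_exp_neg_sq_div {c b a : ℝ} (hc : 0 < c) (ha : 0 < a) :
    StrictAntiOn (fun ξ : ℝ => c * exp (-(ξ ^ 2 - b) / a)) (Ici 0) := by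
  intro x hx y _ hxy
  have hsq : x ^ 2 < y ^ 2 := pow_lt_pow_left₀ hxy hx two_ne_zero
  have hexp : -(y ^ 2 - b) / a < -(x ^ 2 - b) / a := div_lt_div_of_pos_right (by linarith) ha
  exact mul_lt_mul_of_pos_left (exp_lt_exp.2 hexp) hc

theorem tendsto_mul_exp_neg_sq_div_atTop (c b : ℝ) {a : ℝ} (ha : 0 < a) :
    Tendsto (fun ξ : ℝ => c * exp (-(ξ ^ 2 - b) / a)) atTop (nhds 0) := by
  have hexponent : Tendsto (fun ξ : ℝ => -(ξ ^ 2 - b) / a) atTop atBot :=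
    (tendsto_neg_atBot_iff.2
      (tendsto_atTop_add_const_right _ _ (tendsto_pow_atTop two_ne_zero))).atBot_div_const ha
  simpa using (tendsto_exp_atBot.comp hexponent).const_mul c

noncomputable def phicDenom (a ν α₀ p ξ : ℝ) : ℝ :=
  1 + (α₀ ^ ν * p / 2) * exp (α₀ ^ 2 / a) * a ^ ((1 - ν) / 2) *
    (lowerGamma ((1 - ν) / 2) (ξ ^ 2 / a) - lowerGamma ((1 - ν) / 2) (α₀ ^ 2 / a))

section Phic

variable {a ν α₀ p Ste : ℝ}

theorem phic_eq_div :
    phic a ν α₀ p Ste =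
      fun ξ => (a * α₀ ^ ν * Ste / 2) * exp (-(ξ ^ 2 - α₀ ^ 2) / a) / phicDenom a ν α₀ p ξ :=
  rfl

theorem phic_self : phic a ν α₀ p Ste α₀ = a * α₀ ^ ν * Ste / 2 := by
  simp [phic]

theorem phicDenom_self : phicDenom a ν α₀ p α₀ = 1 := by
  simp [phicDenom]

theorem continuous_phicDenom (hν1 : ν < 1) : Continuous (phicDenom a ν α₀ p) := by
  have := continuous_lowerGamma (s := (1 - ν) / 2) (by linarith)
  unfold phicDenom
  fun_prop

theorem monotoneOn_phicDenom (ha : 0 < a) (hν1 : ν < 1) (hα₀ : 0 < α₀) (hp : 0 ≤ p) :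
    MonotoneOn (phicDenom a ν α₀ p) (Ici 0) := by
  intro x hx y hy hxy
  have hγ := monotoneOn_lowerGamma (s := (1 - ν) / 2) (by linarith)
    (mem_Ici.2 (by positivity : 0 ≤ x ^ 2 / a)) (mem_Ici.2 (by positivity : 0 ≤ y ^ 2 / a))
    (div_le_div_of_nonneg_right (pow_le_pow_left₀ hx hxy 2) ha.le)
  unfold phicDenom
  gcongr

theorem one_le_phicDenom (ha : 0 < a) (hν1 : ν < 1) (hα₀ : 0 < α₀) (hp : 0 ≤ p) {ξ : ℝ}
    (hξ : α₀ ≤ ξ) : 1 ≤ phicDenom a ν α₀ p ξ :=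
  phicDenom_self (a := a) ▸
    monotoneOn_phicDenom ha hν1 hα₀ hp (mem_Ici.2 hα₀.le) (mem_Ici.2 (hα₀.le.trans hξ)) hξ

theorem strictAntiOn_phic (ha : 0 < a) (hν1 : ν < 1) (hα₀ : 0 < α₀) (hp : 0 ≤ p)
    (hSte : 0 < Ste) : StrictAntiOn (phic a ν α₀ p Ste) (Ici α₀) := by
  have hIci : Ici α₀ ⊆ Ici 0 := Ici_subset_Ici.2 hα₀.le
  rw [phic_eq_div]
  exact ((strictAntiOn_mul_exp_neg_sq_div (by positivity) ha).mono hIci).div_of_monotoneOn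
    (fun _ _ => by positivity) ((monotoneOn_phicDenom ha hν1 hα₀ hp).mono hIci)
    fun _ hξ => one_pos.trans_le (one_le_phicDenom ha hν1 hα₀ hp hξ)

theorem tendsto_phic_atTop (ha : 0 < a) (hν1 : ν < 1) (hα₀ : 0 < α₀) (hp : 0 ≤ p) :
    Tendsto (phic a ν α₀ p Ste) atTop (nhds 0) := by
  rw [phic_eq_div]
  exact (tendsto_mul_exp_neg_sq_div_atTop _ _ ha).div_of_one_le
    ((eventually_ge_atTop α₀).mono fun _ => one_le_phicDenom ha hν1 hα₀ hp)

theorem continuousOn_phic (ha : 0 < a) (hν1 : ν < 1) (hα₀ : 0 < α₀) (hp : 0 ≤ p) :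
    ContinuousOn (phic a ν α₀ p Ste) (Ici α₀) := by
  rw [phic_eq_div]
  exact (Continuous.continuousOn (by fun_prop)).div (continuous_phicDenom hν1).continuousOn
    fun _ hξ => (one_pos.trans_le (one_le_phicDenom ha hν1 hα₀ hp hξ)).ne'

end Phic

theorem stmt_16 (a ν α₀ p Ste : ℝ)
    (ha : 0 < a) (hν0 : 0 < ν) (hν1 : ν < 1) (hα₀ : 0 < α₀)
    (hp : 0 ≤ p) (hSte : 0 < Ste) :
    StrictAntiOn (phic a ν α₀ p Ste) (Ici α₀) ∧
    Tendsto (phic a ν α₀ p Ste) atTop (nhds 0) ∧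
    (2 * α₀ < a * Ste →
      ∃! ξ : ℝ, ξ ∈ Ioi α₀ ∧ phic a ν α₀ p Ste ξ = ξ ^ (ν + 1)) := by
  have hanti := strictAntiOn_phic ha hν1 hα₀ hp hSte
  have hlim := tendsto_phic_atTop (Ste := Ste) ha hν1 hα₀ hp
  refine ⟨hanti, hlim, fun hSte_large => ?_⟩
  have hpow_mono : MonotoneOn (fun ξ : ℝ => ξ ^ (ν + 1)) (Ici α₀) := fun x hx _ _ hxy =>
    rpow_le_rpow (hα₀.le.trans hx) hxy (by linarith)
  have hpow_cont : ContinuousOn (fun ξ : ℝ => ξ ^ (ν + 1)) (Ici α₀) := fun x hx =>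
    (continuousAt_rpow_const x (ν + 1) (Or.inl (hα₀.trans_le hx).ne')).continuousWithinAt
  have hstart : α₀ ^ (ν + 1) < phic a ν α₀ p Ste α₀ := by
    rw [phic_self, rpow_add hα₀, rpow_one]
    have := rpow_pos_of_pos hα₀ ν
    nlinarith
  exact existsUnique_eq_of_strictAntiOn_of_monotoneOn hanti hpow_mono
    (continuousOn_phic ha hν1 hα₀ hp) hpow_cont hstart hlim (rpow_pos_of_pos hα₀ _)
end
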